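/- Let f : ℝ^n → ℝ be twice continuously differentiable with all Hessian eigenvalues in [-ε, ρ] for ε, ρ ≥ 0, and let x* be a point with ∇f(x*) = 0. Suppose a sequence (x^k) satisfies the gradient descent update x^{k+1} = x^k - η∇f(x^k) with η ≤ min(1/(4ε), 3/(2ρ)), and suppose the local error bound ‖∇f(x^k)‖ ≥ μ‖x^k - x*‖ holds at every iterate for some μ > 0. Then for every k: ‖x^{k+1} - x*‖² ≤ (1 - 4η²μ²(3/4 - ηρ/2) + 2ηε/(1 - 2ηε))‖x^k - x*‖². -/

import Mathlib

/-!
Write `w = xᵏ - x*`. Along the segment from `x*` to `xᵏ`, `∇f(xᵏ) = A w` where `A` is the mean of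
the Hessian over the segment, a symmetric operator with `-ε ≤ A ≤ ρ`. For `c = η(2 - ηρ)` one has
`ρ ≤ ε + 1/c`, and `(A + ε)(ε + 1/c - A) ≥ 0` gives `c‖Aw‖² ≤ ⟪Aw, w⟫ + (cε² + ε)‖w‖²`.
Inserting this into `‖w - ηAw‖² = ‖w‖² - 2η⟪Aw, w⟫ + η²‖Aw‖²` leaves `-η²(3 - 2ηρ)‖Aw‖²`, which the
error bound `‖Aw‖ ≥ μ‖w‖` turns into the contraction term.
-/
open scoped RealInnerProductSpace

section Operator

variable {E : Type*} [NormedAddCommGroup E] [InnerProductSpace ℝ E] {A : E →ₗ[ℝ] E}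

theorem LinearMap.IsSymmetric.norm_apply_sq_le_of_nonneg_of_le (hA : A.IsSymmetric)
    {c : ℝ} (hc : 0 < c) (hA₀ : ∀ v, 0 ≤ ⟪A v, v⟫) (hAc : ∀ v, ⟪A v, v⟫ ≤ c * ‖v‖ ^ 2) (w : E) :
    ‖A w‖ ^ 2 ≤ c * ⟪A w, w⟫ := by
  -- test `A ≥ 0` on `w - c⁻¹ • A w`, and `A ≤ c` on `A w`
  have htest := hA₀ (w - c⁻¹ • A w)
  have hAAw := hAc (A w)
  have hsymm : ⟪A (A w), w⟫ = ‖A w‖ ^ 2 := by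
    rw [hA, real_inner_self_eq_norm_sq]
  have hexpand : ⟪A (w - c⁻¹ • A w), w - c⁻¹ • A w⟫
      = ⟪A w, w⟫ - 2 * c⁻¹ * ‖A w‖ ^ 2 + c⁻¹ ^ 2 * ⟪A (A w), A w⟫ := by
    simp only [map_sub, map_smul, inner_sub_left, inner_sub_right, real_inner_smul_left,
      real_inner_smul_right, hsymm, real_inner_self_eq_norm_sq]
    ring
  rw [hexpand] at htest
  have hAAw' : c⁻¹ ^ 2 * ⟪A (A w), A w⟫ ≤ c⁻¹ * ‖A w‖ ^ 2 :=
    calc c⁻¹ ^ 2 * ⟪A (A w), A w⟫ ≤ c⁻¹ ^ 2 * (c * ‖A w‖ ^ 2) := by gcongr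
      _ = c⁻¹ * ‖A w‖ ^ 2 := by field_simp
  calc ‖A w‖ ^ 2 = c * (c⁻¹ * ‖A w‖ ^ 2) := by field_simp
    _ ≤ c * ⟪A w, w⟫ := by gcongr; linarith

theorem LinearMap.IsSymmetric.norm_apply_sq_le_of_bounds (hA : A.IsSymmetric) {r₁ r₂ : ℝ}
    (hr : r₁ < r₂) (hA₁ : ∀ v, r₁ * ‖v‖ ^ 2 ≤ ⟪A v, v⟫) (hA₂ : ∀ v, ⟪A v, v⟫ ≤ r₂ * ‖v‖ ^ 2)
    (w : E) : ‖A w‖ ^ 2 ≤ (r₁ + r₂) * ⟪A w, w⟫ - r₁ * r₂ * ‖w‖ ^ 2 := by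
  set B := A - r₁ • LinearMap.id
  have hB : B.IsSymmetric := hA.sub (LinearMap.IsSymmetric.id.smul (conj_trivial r₁))
  have hBv : ∀ v, ⟪B v, v⟫ = ⟪A v, v⟫ - r₁ * ‖v‖ ^ 2 := fun v => by
    simp [B, inner_sub_left, real_inner_smul_left]
  have key := hB.norm_apply_sq_le_of_nonneg_of_le (sub_pos.2 hr)
    (fun v => by rw [hBv]; linarith [hA₁ v]) (fun v => by rw [hBv]; linarith [hA₂ v]) w
  have hBw : ‖B w‖ ^ 2 = ‖A w‖ ^ 2 - 2 * r₁ * ⟪A w, w⟫ + r₁ ^ 2 * ‖w‖ ^ 2 := by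
    simp only [B, LinearMap.sub_apply, LinearMap.smul_apply, LinearMap.id_apply]
    rw [norm_sub_sq_real, real_inner_smul_right, norm_smul, mul_pow, Real.norm_eq_abs, sq_abs]
    ring
  rw [hBw, hBv] at key
  linarith

theorem LinearMap.IsSymmetric.norm_sub_smul_apply_sq_le (hA : A.IsSymmetric) {ε ρ η μ : ℝ}
    (hε : 0 ≤ ε) (hρ : 0 ≤ ρ) (hη : 0 < η) (hηε : 2 * η * ε < 1) (hηρ : 2 * η * ρ ≤ 3)
    (hμ : 0 ≤ μ) (hA₁ : ∀ v, -ε * ‖v‖ ^ 2 ≤ ⟪A v, v⟫) (hA₂ : ∀ v, ⟪A v, v⟫ ≤ ρ * ‖v‖ ^ 2)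
    {w : E} (hw : μ * ‖w‖ ≤ ‖A w‖) :
    ‖w - η • A w‖ ^ 2
      ≤ (1 - 4 * η ^ 2 * μ ^ 2 * (3 / 4 - η * ρ / 2) + 2 * η * ε / (1 - 2 * η * ε)) * ‖w‖ ^ 2 := by
  set c := η * (2 - η * ρ)
  have hc : 0 < c := mul_pos hη (by linarith [hη.le])
  have hρc : ρ ≤ ε + c⁻¹ := by
    have : ρ * c ≤ 1 := by nlinarith [sq_nonneg (η * ρ - 1)]
    have : ρ ≤ c⁻¹ := by rw [← one_div, le_div_iff₀ hc]; linarith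
    linarith
  have key := hA.norm_apply_sq_le_of_bounds (r₁ := -ε) (r₂ := ε + c⁻¹)
    (by linarith [inv_pos.2 hc]) hA₁ (fun v => (hA₂ v).trans (by gcongr)) w
  have hcoc : c * ‖A w‖ ^ 2 ≤ ⟪A w, w⟫ + (c * ε ^ 2 + ε) * ‖w‖ ^ 2 := by
    have := mul_le_mul_of_nonneg_left key hc.le
    have hcc : c * c⁻¹ = 1 := mul_inv_cancel₀ hc.ne'
    linear_combination this + (⟪A w, w⟫ + ε * ‖w‖ ^ 2) * hcc
  have hgrad : μ ^ 2 * ‖w‖ ^ 2 ≤ ‖A w‖ ^ 2 := by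
    rw [← mul_pow]; exact pow_le_pow_left₀ (by positivity) hw 2
  have hεcoef : 2 * η * (c * ε ^ 2 + ε) ≤ 2 * η * ε / (1 - 2 * η * ε) := by
    have hc2 : c ≤ 2 * η := by simp only [c]; nlinarith [mul_nonneg (sq_nonneg η) hρ]
    rw [le_div_iff₀ (by linarith)]
    nlinarith [mul_nonneg (mul_nonneg hη.le (sq_nonneg ε)) (by linarith : 0 ≤ 1 - 2 * η * ε),
      pow_nonneg (mul_nonneg hη.le hε) 3]
  have hexp : ‖w - η • A w‖ ^ 2 = ‖w‖ ^ 2 - 2 * η * ⟪A w, w⟫ + η ^ 2 * ‖A w‖ ^ 2 := by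
    rw [norm_sub_sq_real, real_inner_smul_right, norm_smul, mul_pow, Real.norm_eq_abs, sq_abs,
      real_inner_comm]
    ring
  have hstep : 2 * η * c = η ^ 2 + η ^ 2 * (3 - 2 * η * ρ) := by simp only [c]; ring
  rw [hexp]
  linarith [mul_le_mul_of_nonneg_left hcoc (by positivity : 0 ≤ 2 * η),
    mul_le_mul_of_nonneg_left hgrad (by nlinarith : 0 ≤ η ^ 2 * (3 - 2 * η * ρ)),
    mul_le_mul_of_nonneg_right hεcoef (sq_nonneg ‖w‖)]

end Operator

theorem sub_eq_intervalIntegral_apply_of_hasFDerivAt {E F : Type*} [NormedAddCommGroup E]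
    [NormedSpace ℝ E] [NormedAddCommGroup F] [NormedSpace ℝ F] [CompleteSpace F] {G : E → F}
    {G' : E → E →L[ℝ] F} (hG : ∀ x, HasFDerivAt G (G' x) x) (hG' : Continuous G') (a b : E) :
    G b - G a = (∫ s in (0 : ℝ)..1, G' (a + s • (b - a))) (b - a) := by
  have hpath : Continuous fun s : ℝ => G' (a + s • (b - a)) := by fun_prop
  rw [ContinuousLinearMap.intervalIntegral_apply (hpath.intervalIntegrable 0 1)]
  have hderiv : ∀ s ∈ Set.uIcc (0 : ℝ) 1,
      HasDerivAt (fun s : ℝ => G (a + s • (b - a))) (G' (a + s • (b - a)) (b - a)) s :=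
    fun s _ => (hG _).comp_hasDerivAt s
      (by simpa using ((hasDerivAt_id s).smul_const (b - a)).const_add a)
  rw [intervalIntegral.integral_eq_sub_of_hasDerivAt hderiv
    ((hpath.clm_apply continuous_const).intervalIntegrable 0 1)]
  simp

section InnerProductSpace

variable {E : Type*} [NormedAddCommGroup E] [InnerProductSpace ℝ E] [CompleteSpace E]

theorem inner_intervalIntegral_apply {T : ℝ → E →L[ℝ] E} (hT : Continuous T) (a b : ℝ) (u v : E) :
    ⟪(∫ s in a..b, T s) u, v⟫ = ∫ s in a..b, ⟪T s u, v⟫ := by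
  rw [ContinuousLinearMap.intervalIntegral_apply (hT.intervalIntegrable a b)]
  simp only [real_inner_comm v]
  exact ((innerSL ℝ v).intervalIntegral_comp_comm
    ((hT.clm_apply continuous_const).intervalIntegrable a b)).symm

theorem isSymmetric_intervalIntegral {T : ℝ → E →L[ℝ] E} (hT : Continuous T)
    (hsymm : ∀ s, (T s : E →ₗ[ℝ] E).IsSymmetric) (a b : ℝ) :
    ((∫ s in a..b, T s : E →L[ℝ] E) : E →ₗ[ℝ] E).IsSymmetric := fun u v => by
  rw [ContinuousLinearMap.coe_coe, inner_intervalIntegral_apply hT,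
    real_inner_comm, inner_intervalIntegral_apply hT]
  exact intervalIntegral.integral_congr fun s _ => (hsymm s u v).trans (real_inner_comm _ _)

theorem inner_intervalIntegral_apply_self_mem_Icc {T : ℝ → E →L[ℝ] E} (hT : Continuous T)
    {r₁ r₂ : ℝ} (hbound : ∀ s v, r₁ * ‖v‖ ^ 2 ≤ ⟪T s v, v⟫ ∧ ⟪T s v, v⟫ ≤ r₂ * ‖v‖ ^ 2) (v : E) :
    r₁ * ‖v‖ ^ 2 ≤ ⟪(∫ s in (0 : ℝ)..1, T s) v, v⟫ ∧
      ⟪(∫ s in (0 : ℝ)..1, T s) v, v⟫ ≤ r₂ * ‖v‖ ^ 2 := by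
  have hint : IntervalIntegrable (fun s => ⟪T s v, v⟫) MeasureTheory.volume 0 1 :=
    ((hT.clm_apply continuous_const).inner continuous_const).intervalIntegrable 0 1
  rw [inner_intervalIntegral_apply hT]
  constructor
  · simpa using intervalIntegral.integral_mono_on zero_le_one intervalIntegrable_const hint
      fun s _ => (hbound s v).1
  · simpa using intervalIntegral.integral_mono_on zero_le_one hint intervalIntegrable_const
      fun s _ => (hbound s v).2

variable {f : E → ℝ} {H : E → E →L[ℝ] E}

theorem isSymmetric_of_hasFDerivAt_gradient (hf : Differentiable ℝ f)
    (hH : ∀ x, HasFDerivAt (gradient f) (H x) x) (x : E) : (H x : E →ₗ[ℝ] E).IsSymmetric := by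
  have hfderiv : fderiv ℝ f = fun y => innerSL ℝ (gradient f y) := by
    ext y u
    rw [← toDual_gradient]
    rfl
  have hH' : HasFDerivAt (fderiv ℝ f) ((innerSL ℝ).comp (H x)) x := by
    rw [hfderiv]; exact (innerSL ℝ).hasFDerivAt.comp x (hH x)
  intro u v
  have := second_derivative_symmetric (fun y => (hf y).hasFDerivAt) hH' u v
  simp only [ContinuousLinearMap.comp_apply, innerSL_apply_apply] at this
  rw [ContinuousLinearMap.coe_coe, this, real_inner_comm]

theorem continuous_of_hasFDerivAt_gradient (hf : ContDiff ℝ 2 f)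
    (hH : ∀ x, HasFDerivAt (gradient f) (H x) x) : Continuous H := by
  have hgrad : ContDiff ℝ 1 (gradient f) :=
    (InnerProductSpace.toDual ℝ E).symm.contDiff.comp (hf.fderiv_right (by norm_num))
  rw [show H = fderiv ℝ (gradient f) from funext fun x => (hH x).fderiv.symm]
  exact hgrad.continuous_fderiv one_ne_zero

end InnerProductSpace

/-- Linear convergence of gradient descent (Theorem 3 of the paper, GAN inversion case):
if the Hessian eigenvalues lie in `[-ε, ρ]`, `∇f(x*) = 0`, the step size satisfies
`η ≤ min(1/(4ε), 3/(2ρ))` (encoded as `4ηε ≤ 1` and `2ηρ ≤ 3`), and the local error bound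
`‖∇f(x^k)‖ ≥ μ‖x^k - x*‖` holds along the trajectory, then the iterates contract with
factor `1 - 4η²μ²(3/4 - ηρ/2) + 2ηε/(1 - 2ηε)`. -/
theorem stmt4 {n : ℕ} (f : EuclideanSpace ℝ (Fin n) → ℝ) (hf : ContDiff ℝ 2 f)
    (ε ρ : ℝ) (hε : 0 ≤ ε) (hρ : 0 ≤ ρ)
    (H : EuclideanSpace ℝ (Fin n) → EuclideanSpace ℝ (Fin n) →L[ℝ] EuclideanSpace ℝ (Fin n))
    (hH : ∀ x, HasFDerivAt (gradient f) (H x) x)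
    (hHbound : ∀ x w, -ε * ‖w‖ ^ 2 ≤ (inner ℝ (H x w) w : ℝ) ∧
      (inner ℝ (H x w) w : ℝ) ≤ ρ * ‖w‖ ^ 2)
    (xs : EuclideanSpace ℝ (Fin n)) (hxs : gradient f xs = 0)
    (x : ℕ → EuclideanSpace ℝ (Fin n)) (η : ℝ) (hη : 0 < η)
    (hη₁ : 4 * η * ε ≤ 1) (hη₂ : 2 * η * ρ ≤ 3)
    (hupd : ∀ k, x (k + 1) = x k - η • gradient f (x k))
    (μ : ℝ) (hμ : 0 < μ)
    (heb : ∀ k, μ * ‖x k - xs‖ ≤ ‖gradient f (x k)‖) :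
    ∀ k, ‖x (k + 1) - xs‖ ^ 2
      ≤ (1 - 4 * η ^ 2 * μ ^ 2 * (3 / 4 - η * ρ / 2) + 2 * η * ε / (1 - 2 * η * ε))
        * ‖x k - xs‖ ^ 2 := by
  have hHc := continuous_of_hasFDerivAt_gradient hf hH
  have hHsymm := isSymmetric_of_hasFDerivAt_gradient (hf.differentiable (by norm_num)) hH
  intro k
  have hpath : Continuous fun s : ℝ => H (xs + s • (x k - xs)) := by fun_prop
  set A := ∫ s in (0 : ℝ)..1, H (xs + s • (x k - xs))
  have hgrad : gradient f (x k) = A (x k - xs) := by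
    simpa [hxs] using sub_eq_intervalIntegral_apply_of_hasFDerivAt hH hHc xs (x k)
  have hbounds := inner_intervalIntegral_apply_self_mem_Icc hpath fun s => hHbound _
  have hA := isSymmetric_intervalIntegral hpath (fun s => hHsymm _) 0 1
  rw [hupd k, hgrad, sub_right_comm]
  exact hA.norm_sub_smul_apply_sq_le hε hρ hη (by linarith) hη₂ hμ.le (fun v => (hbounds v).1)
    (fun v => (hbounds v).2) (hgrad ▸ heb k)
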